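/- arXiv:2509.16915 — 7 statements merged into one kernel-verified Lean document; each statement's English description precedes it below -/
import Mathlib

section
/- Let X and Y be r×r real symmetric matrices and let p, q ∈ (1, ∞) with 1/p + 1/q = 1. Let λ_1(X), …, λ_r(X) and λ_1(Y), …, λ_r(Y) denote the eigenvalues of X and Y with multiplicity. Then |Tr(XY)| ≤ (∑_{i=1}^r |λ_i(X)|^p)^{1/p} · (∑_{j=1}^r |λ_j(Y)|^q)^{1/q}. -/
/-- Hölder's inequality for the trace inner product of real symmetric
matrices, measuring each matrix by the `ℓ_p` norm of its spectrum (Schatten norms). -/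
theorem trace_holder_symmetric_matrices
    {r : ℕ} (X Y : Matrix (Fin r) (Fin r) ℝ)
    (hX : X.IsHermitian) (hY : Y.IsHermitian)
    (p q : ℝ) (hp : 1 < p) (hq : 1 < q) (hpq : 1 / p + 1 / q = 1) :
    |(X * Y).trace| ≤
      (∑ i, |hX.eigenvalues i| ^ p) ^ (1 / p) * (∑ j, |hY.eigenvalues j| ^ q) ^ (1 / q) := by
  classical
  have hp0 : p ≠ 0 := by positivity
  have hq0 : q ≠ 0 := by positivity
  have hpq' : Real.HolderConjugate p q := Real.holderConjugate_iff.mpr ⟨hp, by simpa [one_div] using hpq⟩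
  set d := hX.eigenvalues with hd
  set e := hY.eigenvalues with he
  set U : Matrix (Fin r) (Fin r) ℝ := (hX.eigenvectorUnitary : Matrix (Fin r) (Fin r) ℝ) with hU
  set V : Matrix (Fin r) (Fin r) ℝ := (hY.eigenvectorUnitary : Matrix (Fin r) (Fin r) ℝ) with hV
  set W : Matrix (Fin r) (Fin r) ℝ := star U * V with hWdef
  have hUU : U * star U = 1 := Matrix.mem_unitaryGroup_iff.mp hX.eigenvectorUnitary.2
  have hUU' : star U * U = 1 := Matrix.mem_unitaryGroup_iff'.mp hX.eigenvectorUnitary.2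
  have hVV : V * star V = 1 := Matrix.mem_unitaryGroup_iff.mp hY.eigenvectorUnitary.2
  have hVV' : star V * V = 1 := Matrix.mem_unitaryGroup_iff'.mp hY.eigenvectorUnitary.2
  have hWW : W * star W = 1 := by
    rw [hWdef, star_mul, star_star, Matrix.mul_assoc, ← Matrix.mul_assoc V, hVV, Matrix.one_mul,
      hUU']
  have hWW' : star W * W = 1 := by
    rw [hWdef, star_mul, star_star, Matrix.mul_assoc, ← Matrix.mul_assoc U, hUU, Matrix.one_mul,
      hVV']
  -- row and column sums of the squares of entries of W are 1
  have hWrow : ∀ i, ∑ j, (W i j) ^ 2 = 1 := by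
    intro i
    have := congrFun (congrFun hWW i) i
    simpa [Matrix.mul_apply, Matrix.one_apply, sq] using this
  have hWcol : ∀ j, ∑ i, (W i j) ^ 2 = 1 := by
    intro j
    have := congrFun (congrFun hWW' j) j
    simpa [Matrix.mul_apply, Matrix.one_apply, sq, mul_comm] using this
  -- trace formula
  have htr : (X * Y).trace = ∑ i, ∑ j, d i * e j * (W i j) ^ 2 := by
    have hXd : X = U * Matrix.diagonal d * star U := by
      simpa [hd, hU, Function.comp] using hX.spectral_theorem
    have hYd : Y = V * Matrix.diagonal e * star V := by
      simpa [he, hV, Function.comp] using hY.spectral_theorem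
    have hprod : X * Y = U * (Matrix.diagonal d * W * Matrix.diagonal e * star W) * star U := by
      rw [hXd, hYd, hWdef, star_mul, star_star]
      simp only [Matrix.mul_assoc]
      rw [hUU, Matrix.mul_one]
    have hdiag : ∀ i, (Matrix.diagonal d * W * Matrix.diagonal e * star W) i i
        = ∑ j, d i * e j * (W i j) ^ 2 := by
      intro i
      rw [Matrix.mul_apply]
      refine Finset.sum_congr rfl fun j _ => ?_
      rw [Matrix.mul_diagonal, Matrix.diagonal_mul, Matrix.star_apply, star_trivial]
      ring
    rw [hprod, Matrix.trace_mul_comm, Matrix.mul_assoc, ← Matrix.mul_assoc (star U), hUU',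
      Matrix.one_mul]
    simp only [Matrix.trace, Matrix.diag_apply, ← Matrix.mul_assoc]
    exact Finset.sum_congr rfl fun i _ => hdiag i
  -- bound by the absolute double sum
  have habs : |(X * Y).trace| ≤ ∑ z : Fin r × Fin r, |d z.1| * |e z.2| * (W z.1 z.2) ^ 2 := by
    rw [htr, ← Finset.sum_product']
    refine (Finset.abs_sum_le_sum_abs _ _).trans (le_of_eq ?_)
    refine Finset.sum_congr rfl fun z _ => ?_
    rw [abs_mul, abs_mul, abs_pow, sq_abs]
  -- Hölder on the product index set
  set f : Fin r × Fin r → ℝ := fun z => |d z.1| * ((W z.1 z.2) ^ 2) ^ (1 / p) with hf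
  set g : Fin r × Fin r → ℝ := fun z => |e z.2| * ((W z.1 z.2) ^ 2) ^ (1 / q) with hg
  have hfg : ∀ z : Fin r × Fin r, f z * g z = |d z.1| * |e z.2| * (W z.1 z.2) ^ 2 := by
    intro z
    have hs : (0:ℝ) ≤ (W z.1 z.2) ^ 2 := sq_nonneg _
    have : ((W z.1 z.2) ^ 2) ^ (1 / p) * ((W z.1 z.2) ^ 2) ^ (1 / q) = (W z.1 z.2) ^ 2 := by
      rw [← Real.rpow_add' hs (by rw [hpq]; norm_num), hpq, Real.rpow_one]
    calc f z * g z = |d z.1| * |e z.2| *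
          (((W z.1 z.2) ^ 2) ^ (1 / p) * ((W z.1 z.2) ^ 2) ^ (1 / q)) := by ring
      _ = |d z.1| * |e z.2| * (W z.1 z.2) ^ 2 := by rw [this]
  have key : ∀ (s t : ℝ), 0 ≤ s → t ≠ 0 → (s ^ (1/t)) ^ t = s := by
    intro s t hs ht
    rw [← Real.rpow_mul hs, one_div, inv_mul_cancel₀ ht, Real.rpow_one]
  have hfp : ∑ z : Fin r × Fin r, f z ^ p = ∑ i, |d i| ^ p := by
    have h1 : ∀ z : Fin r × Fin r, f z ^ p = |d z.1| ^ p * (W z.1 z.2) ^ 2 := by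
      intro z
      rw [hf, Real.mul_rpow (abs_nonneg _) (Real.rpow_nonneg (sq_nonneg _) _),
        key _ _ (sq_nonneg _) hp0]
    rw [Finset.sum_congr rfl fun z _ => h1 z, Fintype.sum_prod_type]
    refine Finset.sum_congr rfl fun i _ => ?_
    show ∑ j, |d i| ^ p * W i j ^ 2 = _
    rw [← Finset.mul_sum, hWrow, mul_one]
  have hgq : ∑ z : Fin r × Fin r, g z ^ q = ∑ j, |e j| ^ q := by
    have h1 : ∀ z : Fin r × Fin r, g z ^ q = |e z.2| ^ q * (W z.1 z.2) ^ 2 := by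
      intro z
      rw [hg, Real.mul_rpow (abs_nonneg _) (Real.rpow_nonneg (sq_nonneg _) _),
        key _ _ (sq_nonneg _) hq0]
    rw [Finset.sum_congr rfl fun z _ => h1 z, Fintype.sum_prod_type_right]
    refine Finset.sum_congr rfl fun j _ => ?_
    show ∑ i, |e j| ^ q * W i j ^ 2 = _
    rw [← Finset.mul_sum, hWcol, mul_one]
  have hHolder := Real.inner_le_Lp_mul_Lq_of_nonneg (s := Finset.univ) hpq'
    (f := f) (g := g)
    (fun z _ => mul_nonneg (abs_nonneg _) (Real.rpow_nonneg (sq_nonneg _) _))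
    (fun z _ => mul_nonneg (abs_nonneg _) (Real.rpow_nonneg (sq_nonneg _) _))
  rw [hfp, hgq] at hHolder
  refine habs.trans ?_
  calc ∑ z : Fin r × Fin r, |d z.1| * |e z.2| * (W z.1 z.2) ^ 2
      = ∑ z : Fin r × Fin r, f z * g z := by
        exact Finset.sum_congr rfl fun z _ => (hfg z).symm
    _ ≤ _ := hHolder
end

section
/- Let P be an r×r doubly stochastic matrix, let a, b ∈ ℝ^r have nonnegative entries, and let p, q ∈ (1, ∞) with 1/p + 1/q = 1. Then aᵀ P b ≤ (∑_{i=1}^r a_i^p)^{1/p} · (∑_{j=1}^r b_j^q)^{1/q}. -/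
/-- Bilinear Hölder bound for doubly stochastic matrices: if `P` is doubly
stochastic and `a`, `b` are entrywise nonnegative, then
`aᵀ P b ≤ (∑ a_i^p)^{1/p} (∑ b_j^q)^{1/q}` for conjugate exponents `p, q`. -/
theorem doubly_stochastic_holder
    {r : ℕ} (P : Matrix (Fin r) (Fin r) ℝ)
    (hP0 : ∀ i j, 0 ≤ P i j) (hProw : ∀ i, ∑ j, P i j = 1) (hPcol : ∀ j, ∑ i, P i j = 1)
    (a b : Fin r → ℝ) (ha : ∀ i, 0 ≤ a i) (hb : ∀ j, 0 ≤ b j)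
    (p q : ℝ) (hp : 1 < p) (hq : 1 < q) (hpq : 1 / p + 1 / q = 1) :
    ∑ i, ∑ j, a i * P i j * b j ≤ (∑ i, a i ^ p) ^ (1 / p) * (∑ j, b j ^ q) ^ (1 / q) := by
  have hpq' : Real.HolderConjugate p q := Real.holderConjugate_iff.mpr ⟨hp, by
    rw [← hpq]; simp [one_div]⟩
  have hp0 : (0:ℝ) < p := lt_trans one_pos hp
  have hq0 : (0:ℝ) < q := lt_trans one_pos hq
  set f : Fin r × Fin r → ℝ := fun x => P x.1 x.2 ^ (1/p) * a x.1 with hf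
  set g : Fin r × Fin r → ℝ := fun x => P x.1 x.2 ^ (1/q) * b x.2 with hg
  have hfn : ∀ x ∈ Finset.univ, 0 ≤ f (x : Fin r × Fin r) := fun x _ =>
    mul_nonneg (Real.rpow_nonneg (hP0 _ _) _) (ha _)
  have hgn : ∀ x ∈ Finset.univ, 0 ≤ g (x : Fin r × Fin r) := fun x _ =>
    mul_nonneg (Real.rpow_nonneg (hP0 _ _) _) (hb _)
  have key := Real.inner_le_Lp_mul_Lq_of_nonneg (s := Finset.univ) hpq' hfn hgn
  have h1 : ∑ x : Fin r × Fin r, f x * g x = ∑ i, ∑ j, a i * P i j * b j := by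
    rw [← Finset.sum_product']
    refine Finset.sum_congr rfl fun x _ => ?_
    simp only [hf, hg]
    rw [show P x.1 x.2 ^ (1/p) * a x.1 * (P x.1 x.2 ^ (1/q) * b x.2)
        = (P x.1 x.2 ^ (1/p) * P x.1 x.2 ^ (1/q)) * (a x.1 * b x.2) by ring,
      ← Real.rpow_add' (hP0 _ _) (by rw [hpq]; norm_num), hpq, Real.rpow_one]
    ring
  have h2 : ∑ x : Fin r × Fin r, f x ^ p = ∑ i, a i ^ p := by
    rw [Fintype.sum_prod_type]
    have e : ∀ i j : Fin r, f (i, j) ^ p = P i j * a i ^ p := by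
      intro i j
      simp only [hf]
      rw [Real.mul_rpow (Real.rpow_nonneg (hP0 _ _) _) (ha _),
        ← Real.rpow_mul (hP0 _ _), one_div_mul_cancel (ne_of_gt hp0), Real.rpow_one]
    simp only [e]
    refine Finset.sum_congr rfl fun i _ => ?_
    rw [← Finset.sum_mul, hProw, one_mul]
  have h3 : ∑ x : Fin r × Fin r, g x ^ q = ∑ j, b j ^ q := by
    rw [Fintype.sum_prod_type]
    have e : ∀ i j : Fin r, g (i, j) ^ q = P i j * b j ^ q := by
      intro i j
      simp only [hg]
      rw [Real.mul_rpow (Real.rpow_nonneg (hP0 _ _) _) (hb _),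
        ← Real.rpow_mul (hP0 _ _), one_div_mul_cancel (ne_of_gt hq0), Real.rpow_one]
    simp only [e]
    rw [Finset.sum_comm]
    refine Finset.sum_congr rfl fun j _ => ?_
    rw [← Finset.sum_mul, hPcol, one_mul]
  rw [h1, h2, h3] at key
  exact key
end

section
/- Let R be a nonempty finite set, Q : R → ℝ, t > 0, and β ∈ (0,1). Let p be the probability mass function on R given by p(r) = exp(t·Q(r)) / ∑_{r'∈R} exp(t·Q(r')), and let OPT = max_{r∈R} Q(r). Then the probability under p of the set {r ∈ R : Q(r) ≤ OPT − (1/t)·ln(|R|/β)} is at most β. -/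
/-- Accuracy guarantee of the exponential mechanism: sampling from the
softmax distribution with parameter `t`, the probability of outputting an element whose
quality score is more than `(1/t)·ln(|R|/β)` below the maximum is at most `β`. -/
theorem exponential_mechanism_accuracy
    {R : Type*} [Fintype R] [Nonempty R]
    (Q : R → ℝ) (t : ℝ) (ht : 0 < t) (β : ℝ) (hβ0 : 0 < β) (hβ1 : β < 1)
    (p : R → ℝ)
    (hp : ∀ r, p r = Real.exp (t * Q r) / ∑ r', Real.exp (t * Q r'))
    (OPT : ℝ) (hOPT : OPT = Finset.univ.sup' Finset.univ_nonempty Q) :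
    ∑ r ∈ Finset.univ.filter
        (fun r => Q r ≤ OPT - (1 / t) * Real.log (Fintype.card R / β)), p r ≤ β := by
  set S : ℝ := ∑ r', Real.exp (t * Q r') with hS
  have hcard : (0 : ℝ) < Fintype.card R := by
    exact_mod_cast Fintype.card_pos
  have hratio : (0 : ℝ) < Fintype.card R / β := div_pos hcard hβ0
  -- there is an r* attaining OPT
  obtain ⟨r0, -, hr0⟩ := Finset.exists_mem_eq_sup' Finset.univ_nonempty Q
  have hSge : Real.exp (t * OPT) ≤ S := by
    have : Real.exp (t * OPT) = Real.exp (t * Q r0) := by rw [hOPT, hr0]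
    rw [this]
    exact Finset.single_le_sum (f := fun r => Real.exp (t * Q r)) (fun r _ => (Real.exp_pos _).le) (Finset.mem_univ r0)
  have hSpos : 0 < S := lt_of_lt_of_le (Real.exp_pos _) hSge
  have hbound : ∀ r ∈ Finset.univ.filter
      (fun r => Q r ≤ OPT - (1 / t) * Real.log (Fintype.card R / β)),
      p r ≤ β / Fintype.card R := by
    intro r hr
    rw [Finset.mem_filter] at hr
    have hq : Q r ≤ OPT - (1 / t) * Real.log (Fintype.card R / β) := hr.2
    have hnum : Real.exp (t * Q r) ≤ Real.exp (t * OPT) * (β / Fintype.card R) := by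
      have h1 : t * Q r ≤ t * OPT - Real.log (Fintype.card R / β) := by
        have := mul_le_mul_of_nonneg_left hq ht.le
        calc t * Q r ≤ t * (OPT - (1 / t) * Real.log (Fintype.card R / β)) := this
          _ = t * OPT - Real.log (Fintype.card R / β) := by
              field_simp
      calc Real.exp (t * Q r) ≤ Real.exp (t * OPT - Real.log (Fintype.card R / β)) :=
            Real.exp_le_exp.mpr h1
        _ = Real.exp (t * OPT) * (β / Fintype.card R) := by
            rw [Real.exp_sub, Real.exp_log hratio]
            field_simp
    rw [hp r]
    rw [div_le_iff₀ hSpos]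
    calc Real.exp (t * Q r) ≤ Real.exp (t * OPT) * (β / Fintype.card R) := hnum
      _ ≤ S * (β / Fintype.card R) := by
          apply mul_le_mul_of_nonneg_right hSge (div_pos hβ0 hcard).le
      _ = β / Fintype.card R * S := mul_comm _ _
  calc ∑ r ∈ Finset.univ.filter
        (fun r => Q r ≤ OPT - (1 / t) * Real.log (Fintype.card R / β)), p r
      ≤ ∑ _r ∈ Finset.univ.filter
        (fun r => Q r ≤ OPT - (1 / t) * Real.log (Fintype.card R / β)),
        (β / Fintype.card R) := Finset.sum_le_sum hbound
    _ = (Finset.univ.filter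
        (fun r => Q r ≤ OPT - (1 / t) * Real.log (Fintype.card R / β))).card
          * (β / Fintype.card R) := by rw [Finset.sum_const, nsmul_eq_mul]
    _ ≤ Fintype.card R * (β / Fintype.card R) := by
        apply mul_le_mul_of_nonneg_right _ (div_pos hβ0 hcard).le
        exact_mod_cast Finset.card_filter_le _ _
    _ = β := by field_simp
end

section
/- Let R be a nonempty finite set, let Q, Q' : R → ℝ satisfy |Q(r) − Q'(r)| ≤ Δ for all r ∈ R with Δ > 0, and let ε > 0. Define probability mass functions p(r) = exp(ε·Q(r)/(2Δ)) / ∑_{r'} exp(ε·Q(r')/(2Δ)) and p'(r) = exp(ε·Q'(r)/(2Δ)) / ∑_{r'} exp(ε·Q'(r')/(2Δ)). Then p(r) ≤ e^ε · p'(r) for every r ∈ R. -/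
/-- Privacy guarantee of the exponential mechanism with a `Δ`-sensitive
quality score: the softmax output distributions for two quality scores differing
pointwise by at most `Δ` are within a multiplicative factor `e^ε`. -/
theorem exponential_mechanism_privacy
    {R : Type*} [Fintype R] [Nonempty R]
    (Q Q' : R → ℝ) (Δ : ℝ) (hΔ : 0 < Δ) (hQQ' : ∀ r, |Q r - Q' r| ≤ Δ)
    (ε : ℝ) (hε : 0 < ε)
    (p p' : R → ℝ)
    (hp : ∀ r, p r = Real.exp (ε * Q r / (2 * Δ)) / ∑ r', Real.exp (ε * Q r' / (2 * Δ)))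
    (hp' : ∀ r, p' r = Real.exp (ε * Q' r / (2 * Δ)) / ∑ r', Real.exp (ε * Q' r' / (2 * Δ))) :
    ∀ r, p r ≤ Real.exp ε * p' r := by
  intro r
  rw [hp r, hp' r]
  set B : ℝ := ∑ r', Real.exp (ε * Q r' / (2 * Δ)) with hB
  set B' : ℝ := ∑ r', Real.exp (ε * Q' r' / (2 * Δ)) with hB'
  have hBpos : 0 < B :=
    Finset.sum_pos (fun i _ => Real.exp_pos _) Finset.univ_nonempty
  have hB'pos : 0 < B' :=
    Finset.sum_pos (fun i _ => Real.exp_pos _) Finset.univ_nonempty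
  -- pointwise exponent bound
  have key : ∀ s s' : ℝ, |s - s'| ≤ Δ →
      Real.exp (ε * s / (2 * Δ)) ≤ Real.exp (ε / 2) * Real.exp (ε * s' / (2 * Δ)) := by
    intro s s' h
    rw [← Real.exp_add, Real.exp_le_exp]
    have h1 : s - s' ≤ Δ := (abs_le.mp h).2
    have h2 : ε * s / (2 * Δ) - ε * s' / (2 * Δ) = ε * (s - s') / (2 * Δ) := by ring
    have h3 : ε * (s - s') / (2 * Δ) ≤ ε / 2 := by
      rw [div_le_iff₀ (by linarith)]
      nlinarith
    linarith [h3, (by linarith [h2] : ε * s / (2 * Δ) ≤ ε * (s - s') / (2 * Δ) + ε * s' / (2 * Δ))]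
  have hnum : Real.exp (ε * Q r / (2 * Δ)) ≤
      Real.exp (ε / 2) * Real.exp (ε * Q' r / (2 * Δ)) := key _ _ (hQQ' r)
  have hden : B' ≤ Real.exp (ε / 2) * B := by
    rw [hB, hB', Finset.mul_sum]
    apply Finset.sum_le_sum
    intro i _
    exact key _ _ (by rw [abs_sub_comm]; exact hQQ' i)
  have hinv : 1 / B ≤ Real.exp (ε / 2) / B' := by
    rw [div_le_div_iff₀ hBpos hB'pos]
    linarith
  calc Real.exp (ε * Q r / (2 * Δ)) / B
      ≤ (Real.exp (ε / 2) * Real.exp (ε * Q' r / (2 * Δ))) * (Real.exp (ε / 2) / B') := by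
        rw [div_eq_mul_one_div]
        exact mul_le_mul hnum hinv (by positivity) (by positivity)
    _ = (Real.exp (ε / 2) * Real.exp (ε / 2)) * (Real.exp (ε * Q' r / (2 * Δ)) / B') := by
        ring
    _ = Real.exp ε * (Real.exp (ε * Q' r / (2 * Δ)) / B') := by
        rw [← Real.exp_add]; norm_num
end

section
/- Let ℱ be a finite set, f' ∉ ℱ, and s a positive integer. Let F : ℱ → [0,1] and F' : ℱ ∪ {f'} → [0,1] be measures with F'(f) = F(f) for every f ∈ ℱ, ∑_{f∈ℱ} F(f) ≤ s, and ∑_{f∈ℱ∪{f'}} F'(f) ≤ s. Suppose c ≥ 0 satisfies ∑_{f∈ℱ} min{1, c·F(f)} = s and c' ≥ 0 satisfies ∑_{f∈ℱ∪{f'}} min{1, c'·F'(f)} = s. Define the Bregman projections G(f) = (1/s)·min{1, c·F(f)} for f ∈ ℱ (and G(f') = 0) and G'(f) = (1/s)·min{1, c'·F'(f)} for f ∈ ℱ ∪ {f'}. Then ∑_{f∈ℱ∪{f'}} |G(f) − G'(f)| ≤ 2/s. -/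
/-- ℓ₁-stability of the Bregman projection onto `1/s`-dense distributions
when a single action is added to the action set (here the added action is `none` in
`Option α`): the projected distributions differ by at most `2/s` in ℓ₁ distance. -/
theorem bregman_projection_add_action_l1_bound
    {α : Type*} [Fintype α] (s : ℕ) (hs : 0 < s)
    (F : α → ℝ) (F' : Option α → ℝ)
    (hF : ∀ f, F f ∈ Set.Icc (0 : ℝ) 1) (hF' : ∀ f, F' f ∈ Set.Icc (0 : ℝ) 1)
    (hagree : ∀ f : α, F' (some f) = F f)
    (hFs : ∑ f, F f ≤ s) (hF's : ∑ f, F' f ≤ s)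
    (c c' : ℝ) (hc : 0 ≤ c) (hc' : 0 ≤ c')
    (hcs : ∑ f, min 1 (c * F f) = s)
    (hc's : ∑ f, min 1 (c' * F' f) = s)
    (G G' : Option α → ℝ)
    (hG : ∀ f : α, G (some f) = (1 / s) * min 1 (c * F f)) (hGnone : G none = 0)
    (hG' : ∀ f, G' f = (1 / s) * min 1 (c' * F' f)) :
    ∑ f, |G f - G' f| ≤ 2 / s := by
  have hs' : (0:ℝ) < s := by exact_mod_cast hs
  set t := min 1 (c' * F' none) with ht
  have ht0 : 0 ≤ t := le_min one_pos.le (mul_nonneg hc' (hF' none).1)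
  have ht1 : t ≤ 1 := min_le_left _ _
  have hsum' : ∑ f : α, min 1 (c' * F f) = s - t := by
    have h := hc's
    rw [Fintype.sum_option] at h
    simp only [hagree] at h
    linarith
  rw [Fintype.sum_option]
  have habs0 : |G none - G' none| = t / s := by
    rw [hGnone, hG', zero_sub, abs_neg, abs_of_nonneg (by positivity), ← ht]
    ring
  rcases le_total c' c with hle | hle
  · have hterm : ∀ f : α, |G (some f) - G' (some f)|
        = (1/(s:ℝ)) * (min 1 (c * F f) - min 1 (c' * F f)) := by
      intro f
      rw [hG f, hG' (some f), hagree, ← mul_sub, abs_mul,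
        abs_of_nonneg (by positivity : (0:ℝ) ≤ 1/(s:ℝ))]
      congr 1
      rw [abs_of_nonneg]
      have h1 : c' * F f ≤ c * F f := mul_le_mul_of_nonneg_right hle (hF f).1
      exact sub_nonneg.2 (min_le_min le_rfl h1)
    rw [habs0]
    have hsum : ∑ f : α, |G (some f) - G' (some f)| = t / s := by
      simp only [hterm]
      rw [← Finset.mul_sum, Finset.sum_sub_distrib, hcs, hsum']
      ring
    rw [hsum]
    rw [← add_div, div_le_div_iff₀ hs' hs']
    nlinarith
  · have hterm : ∀ f : α, |G (some f) - G' (some f)|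
        = (1/(s:ℝ)) * (min 1 (c' * F f) - min 1 (c * F f)) := by
      intro f
      rw [hG f, hG' (some f), hagree, ← mul_sub, abs_mul,
        abs_of_nonneg (by positivity : (0:ℝ) ≤ 1/(s:ℝ))]
      congr 1
      rw [abs_sub_comm, abs_of_nonneg]
      have h1 : c * F f ≤ c' * F f := mul_le_mul_of_nonneg_right hle (hF f).1
      exact sub_nonneg.2 (min_le_min le_rfl h1)
    rw [habs0]
    have hsum : ∑ f : α, |G (some f) - G' (some f)| = -(t / s) := by
      simp only [hterm]
      rw [← Finset.mul_sum, Finset.sum_sub_distrib, hcs, hsum']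
      ring
    rw [hsum]
    have : (0:ℝ) < 2 / s := by positivity
    linarith
end

section
/- Let A and B be r×r real symmetric matrices. Then Tr(exp(A + B)) ≤ Tr(exp(A)·exp(B)), where exp denotes the matrix exponential. -/
open Matrix NormedSpace Filter Nat

namespace GTaux

variable {r : ℕ}

local notation "Mat" => Matrix (Fin r) (Fin r) ℝ

lemma trace_transpose_mul_self_nonneg (M : Mat) : 0 ≤ (Mᵀ * M).trace := by
  rw [Matrix.trace]
  refine Finset.sum_nonneg fun i _ => ?_
  simp only [Matrix.diag_apply, Matrix.mul_apply, Matrix.transpose_apply]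
  exact Finset.sum_nonneg fun j _ => mul_self_nonneg _

lemma trace_transpose_mul (X Y : Mat) :
    (Xᵀ * Y).trace = ∑ p : Fin r × Fin r, X p.1 p.2 * Y p.1 p.2 := by
  rw [← Finset.univ_product_univ, Finset.sum_product, Matrix.trace]
  simp only [Matrix.diag_apply, Matrix.mul_apply, Matrix.transpose_apply]
  rw [Finset.sum_comm]

/-- Cauchy–Schwarz for the Frobenius inner product. -/
lemma trace_CS (X Y : Mat) :
    (Xᵀ * Y).trace ≤ Real.sqrt ((Xᵀ * X).trace * (Yᵀ * Y).trace) := by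
  rw [trace_transpose_mul, trace_transpose_mul, trace_transpose_mul]
  calc ∑ p : Fin r × Fin r, X p.1 p.2 * Y p.1 p.2
      ≤ |∑ p : Fin r × Fin r, X p.1 p.2 * Y p.1 p.2| := le_abs_self _
    _ = Real.sqrt ((∑ p : Fin r × Fin r, X p.1 p.2 * Y p.1 p.2) ^ 2) := (Real.sqrt_sq_eq_abs _).symm
    _ ≤ Real.sqrt ((∑ p : Fin r × Fin r, X p.1 p.2 * X p.1 p.2) *
          (∑ p : Fin r × Fin r, Y p.1 p.2 * Y p.1 p.2)) := by
        apply Real.sqrt_le_sqrt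
        calc (∑ p : Fin r × Fin r, X p.1 p.2 * Y p.1 p.2) ^ 2
            ≤ (∑ p : Fin r × Fin r, X p.1 p.2 ^ 2) * (∑ p : Fin r × Fin r, Y p.1 p.2 ^ 2) :=
              Finset.sum_mul_sq_le_sq_mul_sq Finset.univ _ _
          _ = _ := by simp [sq]

lemma pow_succ_shift (P Q : Mat) (k : ℕ) : (P * Q) ^ (k + 1) = P * (Q * P) ^ k * Q := by
  induction k with
  | zero => simp
  | succ k ih =>
    rw [pow_succ, ih, pow_succ]
    simp only [Matrix.mul_assoc]

lemma trace_pow_mul_comm (P Q : Mat) (k : ℕ) : ((P * Q) ^ k).trace = ((Q * P) ^ k).trace := by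
  cases k with
  | zero => rfl
  | succ k =>
    rw [pow_succ_shift, Matrix.trace_mul_comm, ← Matrix.mul_assoc, ← _root_.pow_succ']

/-- Mutual induction: a Weyl-type bound and the key trace inequality for powers of two. -/
lemma key (n : ℕ) :
    (∀ M : Mat, |(M ^ 2 ^ (n + 1)).trace| ≤ ((Mᵀ * M) ^ 2 ^ n).trace) ∧
    (∀ X Y : Mat, Xᵀ = X → Yᵀ = Y →
      ((X * Y) ^ 2 ^ n).trace ≤ (X ^ 2 ^ n * Y ^ 2 ^ n).trace) := by
  induction n with
  | zero =>
    constructor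
    · intro M
      have hM2 : M ^ 2 ^ 1 = M * M := by norm_num [pow_two]
      have hup : (M * M).trace ≤ (Mᵀ * M).trace := by
        have h := trace_CS Mᵀ M
        rwa [Matrix.transpose_transpose, Matrix.trace_mul_comm M Mᵀ,
          Real.sqrt_mul_self (trace_transpose_mul_self_nonneg M)] at h
      have hlo : -(Mᵀ * M).trace ≤ (M * M).trace := by
        have h := trace_CS (-Mᵀ) M
        rw [Matrix.transpose_neg, Matrix.transpose_transpose, Matrix.neg_mul,
          Matrix.mul_neg, Matrix.neg_mul, neg_neg, Matrix.trace_neg,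
          Matrix.trace_mul_comm M Mᵀ,
          Real.sqrt_mul_self (trace_transpose_mul_self_nonneg M)] at h
        linarith
      rw [hM2, pow_zero, pow_one]
      exact abs_le.mpr ⟨hlo, hup⟩
    · intro X Y hX hY
      simp
  | succ n ih =>
    have Cnew : ∀ X Y : Mat, Xᵀ = X → Yᵀ = Y →
        ((X * Y) ^ 2 ^ (n + 1)).trace ≤ (X ^ 2 ^ (n + 1) * Y ^ 2 ^ (n + 1)).trace := by
      intro X Y hX hY
      have e5 : ∀ Z : Mat, (Z * Z) ^ 2 ^ n = Z ^ 2 ^ (n + 1) := by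
        intro Z
        rw [← sq, ← pow_mul, ← _root_.pow_succ']
      have e2 : (X * Y)ᵀ * (X * Y) = (Y * (X * X)) * Y := by
        rw [Matrix.transpose_mul, hX, hY]
        simp only [Matrix.mul_assoc]
      have e3 : (((Y * (X * X)) * Y) ^ 2 ^ n).trace = (((X * X) * (Y * Y)) ^ 2 ^ n).trace := by
        rw [trace_pow_mul_comm (Y * (X * X)) Y]
        have h4 : Y * (Y * (X * X)) = (Y * Y) * (X * X) := by rw [Matrix.mul_assoc]
        rw [h4, trace_pow_mul_comm (Y * Y) (X * X)]
      calc ((X * Y) ^ 2 ^ (n + 1)).trace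
          ≤ (((X * Y)ᵀ * (X * Y)) ^ 2 ^ n).trace :=
            le_trans (le_abs_self _) (ih.1 (X * Y))
        _ = (((X * X) * (Y * Y)) ^ 2 ^ n).trace := by rw [e2, e3]
        _ ≤ ((X * X) ^ 2 ^ n * (Y * Y) ^ 2 ^ n).trace :=
            ih.2 (X * X) (Y * Y)
              (by rw [Matrix.transpose_mul, hX]) (by rw [Matrix.transpose_mul, hY])
        _ = (X ^ 2 ^ (n + 1) * Y ^ 2 ^ (n + 1)).trace := by rw [e5, e5]
    refine ⟨?_, Cnew⟩
    intro M
    have h1 : M ^ 2 ^ (n + 1 + 1) = (M * M) ^ 2 ^ (n + 1) := by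
      rw [← sq, ← pow_mul, ← _root_.pow_succ']
    have e2 : (((M * M)ᵀ * (M * M)) ^ 2 ^ n).trace
        = (((Mᵀ * M) * (M * Mᵀ)) ^ 2 ^ n).trace := by
      have h2 : (M * M)ᵀ * (M * M) = Mᵀ * ((Mᵀ * (M * M))) := by
        rw [Matrix.transpose_mul]
        simp only [Matrix.mul_assoc]
      have h3 : (Mᵀ * (M * M)) * Mᵀ = (Mᵀ * M) * (M * Mᵀ) := by
        simp only [Matrix.mul_assoc]
      rw [h2, trace_pow_mul_comm Mᵀ (Mᵀ * (M * M)), h3]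
    set N : Mat := (Mᵀ * M) ^ 2 ^ n with hN
    set P : Mat := (M * Mᵀ) ^ 2 ^ n with hP
    have hNt : Nᵀ = N := by
      rw [hN, Matrix.transpose_pow, Matrix.transpose_mul, Matrix.transpose_transpose]
    have hPt : Pᵀ = P := by
      rw [hP, Matrix.transpose_pow, Matrix.transpose_mul, Matrix.transpose_transpose]
    have hsplit : (2:ℕ) ^ (n + 1) = 2 ^ n + 2 ^ n := by rw [pow_succ]; ring
    have htr : (N * N).trace = ((Mᵀ * M) ^ 2 ^ (n + 1)).trace := by
      rw [hN, ← pow_add, ← hsplit]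
    have htrP : (P * P).trace = ((Mᵀ * M) ^ 2 ^ (n + 1)).trace := by
      rw [hP, ← pow_add, ← hsplit, trace_pow_mul_comm M Mᵀ]
    have hNP : (N * P).trace ≤ ((Mᵀ * M) ^ 2 ^ (n + 1)).trace := by
      have h0 : 0 ≤ (N * N).trace := by
        have h0' := trace_transpose_mul_self_nonneg N
        rwa [hNt] at h0'
      have h := trace_CS N P
      rw [hNt, hPt, htr, htrP, Real.sqrt_mul_self (htr ▸ h0)] at h
      exact h
    have e4 : (((Mᵀ * M) * (M * Mᵀ)) ^ 2 ^ n).trace ≤ (N * P).trace :=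
      ih.2 (Mᵀ * M) (M * Mᵀ)
        (by rw [Matrix.transpose_mul, Matrix.transpose_transpose])
        (by rw [Matrix.transpose_mul, Matrix.transpose_transpose])
    calc |(M ^ 2 ^ (n + 1 + 1)).trace|
        = |((M * M) ^ 2 ^ (n + 1)).trace| := by rw [h1]
      _ ≤ (((M * M)ᵀ * (M * M)) ^ 2 ^ n).trace := ih.1 (M * M)
      _ = (((Mᵀ * M) * (M * Mᵀ)) ^ 2 ^ n).trace := e2
      _ ≤ (N * P).trace := e4
      _ ≤ ((Mᵀ * M) ^ 2 ^ (n + 1)).trace := hNP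


section Analytic

variable [Nonempty (Fin r)]

attribute [local instance] Matrix.linftyOpNormedRing Matrix.linftyOpNormedAlgebra

lemma norm_exp_le (x : Mat) : ‖exp x‖ ≤ Real.exp ‖x‖ := by
  rw [exp_eq_tsum ℝ]
  refine le_trans (norm_tsum_le_tsum_norm (norm_expSeries_summable' x)) ?_
  rw [Real.exp_eq_exp_ℝ, exp_eq_tsum_div]
  refine Summable.tsum_le_tsum (fun n => ?_) (norm_expSeries_summable' x)
    (Real.summable_pow_div_factorial ‖x‖)
  rw [norm_smul, norm_inv, Real.norm_natCast, div_eq_inv_mul]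
  exact mul_le_mul_of_nonneg_left (norm_pow_le x n) (by positivity)

lemma norm_exp_sub_one_sub_le (x : Mat) :
    ‖exp x - 1 - x‖ ≤ ‖x‖ ^ 2 * Real.exp ‖x‖ := by
  have hs : Summable fun n : ℕ => (n ! : ℝ)⁻¹ • x ^ n := expSeries_summable' x
  have hinj2 : Function.Injective (fun n : ℕ => n + 2) := add_left_injective 2
  have hs1 : Summable fun n : ℕ => ((n + 1)! : ℝ)⁻¹ • x ^ (n + 1) :=
    hs.comp_injective (add_left_injective 1)
  have key : exp x - 1 - x = ∑' n : ℕ, ((n + 2)! : ℝ)⁻¹ • x ^ (n + 2) := by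
    have hexp : exp x = ∑' n : ℕ, (n ! : ℝ)⁻¹ • x ^ n := by rw [exp_eq_tsum ℝ]
    rw [hexp, hs.tsum_eq_zero_add, hs1.tsum_eq_zero_add]
    simp only [Nat.factorial_zero, Nat.factorial_one, Nat.cast_one, inv_one, one_smul,
      pow_zero, pow_one, zero_add, add_assoc, one_add_one_eq_two]
    abel
  rw [key]
  have hsn : Summable fun n : ℕ => ‖((n + 2)! : ℝ)⁻¹ • x ^ (n + 2)‖ :=
    (norm_expSeries_summable' x).comp_injective hinj2
  refine le_trans (norm_tsum_le_tsum_norm hsn) ?_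
  have hmaj : ∀ n : ℕ, ‖((n + 2)! : ℝ)⁻¹ • x ^ (n + 2)‖ ≤ ‖x‖ ^ 2 * (‖x‖ ^ n / n !) := by
    intro n
    rw [norm_smul, norm_inv, Real.norm_natCast]
    calc ((n + 2)! : ℝ)⁻¹ * ‖x ^ (n + 2)‖ ≤ (n ! : ℝ)⁻¹ * ‖x‖ ^ (n + 2) := by
          refine mul_le_mul ?_ (norm_pow_le x (n + 2)) (norm_nonneg _) (by positivity)
          have h1 : (n ! : ℝ) ≤ (n + 2)! := by
            exact_mod_cast Nat.factorial_le (by omega)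
          exact inv_anti₀ (by positivity) h1
      _ = ‖x‖ ^ 2 * (‖x‖ ^ n / n !) := by
          rw [pow_add]
          field_simp
  refine le_trans (Summable.tsum_le_tsum hmaj hsn ?_) ?_
  · exact (Real.summable_pow_div_factorial ‖x‖).mul_left _
  · rw [tsum_mul_left, Real.exp_eq_exp_ℝ, exp_eq_tsum_div]

lemma exp_prod_remainder (x y : Mat) (c : ℝ) (hc : c ≤ 1)
    (hx : ‖x‖ ≤ c) (hy : ‖y‖ ≤ c) :
    ‖exp x * exp y - exp (x + y)‖ ≤ 58 * c ^ 2 := by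
  have hc0 : 0 ≤ c := le_trans (norm_nonneg x) hx
  have hexp3 : ∀ t : ℝ, t ≤ 1 → Real.exp t ≤ 3 := by
    intro t ht
    calc Real.exp t ≤ Real.exp 1 := Real.exp_le_exp.mpr ht
      _ ≤ 3 := by linarith [Real.exp_one_lt_d9.le]
  set Rx : Mat := exp x - 1 - x with hRx
  set Ry : Mat := exp y - 1 - y with hRy
  set Rxy : Mat := exp (x + y) - 1 - (x + y) with hRxy
  have hbx : ‖Rx‖ ≤ 3 * c ^ 2 := by
    calc ‖Rx‖ ≤ ‖x‖ ^ 2 * Real.exp ‖x‖ := norm_exp_sub_one_sub_le x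
      _ ≤ c ^ 2 * 3 := by
          apply mul_le_mul (by nlinarith [norm_nonneg x]) (hexp3 _ (hx.trans hc))
            (Real.exp_nonneg _) (by positivity)
      _ = 3 * c ^ 2 := by ring
  have hby : ‖Ry‖ ≤ 3 * c ^ 2 := by
    calc ‖Ry‖ ≤ ‖y‖ ^ 2 * Real.exp ‖y‖ := norm_exp_sub_one_sub_le y
      _ ≤ c ^ 2 * 3 := by
          apply mul_le_mul (by nlinarith [norm_nonneg y]) (hexp3 _ (hy.trans hc))
            (Real.exp_nonneg _) (by positivity)
      _ = 3 * c ^ 2 := by ring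
  have hxy : ‖x + y‖ ≤ 2 * c := by
    calc ‖x + y‖ ≤ ‖x‖ + ‖y‖ := norm_add_le x y
      _ ≤ 2 * c := by linarith
  have hbxy : ‖Rxy‖ ≤ 36 * c ^ 2 := by
    calc ‖Rxy‖ ≤ ‖x + y‖ ^ 2 * Real.exp ‖x + y‖ := norm_exp_sub_one_sub_le (x + y)
      _ ≤ (2 * c) ^ 2 * 9 := by
          have h9 : Real.exp ‖x + y‖ ≤ 9 := by
            calc Real.exp ‖x + y‖ ≤ Real.exp (2 * c) := Real.exp_le_exp.mpr hxy
              _ = Real.exp c * Real.exp c := by rw [← Real.exp_add]; ring_nf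
              _ ≤ 3 * 3 := by
                  have := hexp3 c hc
                  nlinarith [Real.exp_nonneg c]
              _ = 9 := by norm_num
          apply mul_le_mul (by nlinarith [norm_nonneg (x + y)]) h9 (Real.exp_nonneg _)
            (by positivity)
      _ = 36 * c ^ 2 := by ring
  have hEy : exp y = 1 + y + Ry := by rw [hRy]; abel
  have hEx : exp x = 1 + x + Rx := by rw [hRx]; abel
  have hExy : exp (x + y) = 1 + (x + y) + Rxy := by rw [hRxy]; abel
  have hid : exp x * exp y - exp (x + y)
      = x * y + x * Ry + Ry + Rx * (1 + y + Ry) - Rxy := by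
    rw [hEx, hEy, hExy]
    simp only [Matrix.add_mul, Matrix.mul_add, Matrix.one_mul, Matrix.mul_one]
    abel
  have hnorm1 : ‖(1 : Mat) + y + Ry‖ ≤ 5 := by
    calc ‖(1 : Mat) + y + Ry‖ ≤ ‖(1 : Mat)‖ + ‖y‖ + ‖Ry‖ := norm_add₃_le
      _ ≤ 1 + c + 3 * c ^ 2 := by
          rw [norm_one]
          gcongr
      _ ≤ 5 := by nlinarith
  rw [hid]
  calc ‖x * y + x * Ry + Ry + Rx * (1 + y + Ry) - Rxy‖
      ≤ ‖x * y‖ + ‖x * Ry‖ + ‖Ry‖ + ‖Rx * (1 + y + Ry)‖ + ‖Rxy‖ := by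
        refine le_trans (norm_sub_le _ _) ?_
        have h4 : ‖x * y + x * Ry + Ry + Rx * (1 + y + Ry)‖
            ≤ ‖x * y‖ + ‖x * Ry‖ + ‖Ry‖ + ‖Rx * (1 + y + Ry)‖ := by
          refine le_trans (norm_add_le _ _) ?_
          have := norm_add₃_le (a := x * y) (b := x * Ry) (c := Ry)
          linarith
        linarith
    _ ≤ c * c + c * (3 * c ^ 2) + 3 * c ^ 2 + (3 * c ^ 2) * 5 + 36 * c ^ 2 := by
        have h1 : ‖x * y‖ ≤ c * c :=
          le_trans (norm_mul_le x y) (mul_le_mul hx hy (norm_nonneg y) hc0)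
        have h2 : ‖x * Ry‖ ≤ c * (3 * c ^ 2) :=
          le_trans (norm_mul_le x Ry) (mul_le_mul hx hby (norm_nonneg Ry) hc0)
        have h3 : ‖Rx * (1 + y + Ry)‖ ≤ (3 * c ^ 2) * 5 :=
          le_trans (norm_mul_le _ _)
            (mul_le_mul hbx hnorm1 (norm_nonneg _) (by positivity))
        linarith
    _ ≤ 58 * c ^ 2 := by nlinarith

lemma norm_pow_sub_pow (a b : Mat) (K : ℝ) (ha : ‖a‖ ≤ K) (hb : ‖b‖ ≤ K) (m : ℕ) :
    ‖a ^ (m + 1) - b ^ (m + 1)‖ ≤ (m + 1) * K ^ m * ‖a - b‖ := by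
  have hK0 : 0 ≤ K := le_trans (norm_nonneg a) ha
  induction m with
  | zero => simp
  | succ m ih =>
    have hid : a ^ (m + 2) - b ^ (m + 2) = a ^ (m + 1) * (a - b) + (a ^ (m + 1) - b ^ (m + 1)) * b := by
      simp only [Matrix.sub_mul, Matrix.mul_sub, pow_succ]
      abel
    have hap : ‖a ^ (m + 1)‖ ≤ K ^ (m + 1) :=
      le_trans (norm_pow_le a (m + 1)) (pow_le_pow_left₀ (norm_nonneg a) ha _)
    calc ‖a ^ (m + 1 + 1) - b ^ (m + 1 + 1)‖
        = ‖a ^ (m + 1) * (a - b) + (a ^ (m + 1) - b ^ (m + 1)) * b‖ := by rw [hid]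
      _ ≤ ‖a ^ (m + 1) * (a - b)‖ + ‖(a ^ (m + 1) - b ^ (m + 1)) * b‖ := norm_add_le _ _
      _ ≤ K ^ (m + 1) * ‖a - b‖ + ((m + 1) * K ^ m * ‖a - b‖) * K := by
          gcongr
          · exact le_trans (norm_mul_le _ _)
              (mul_le_mul_of_nonneg_right hap (norm_nonneg _))
          · exact le_trans (norm_mul_le _ _)
              (mul_le_mul ih hb (norm_nonneg b) (by positivity))
      _ ≤ (↑(m + 1) + 1) * K ^ (m + 1) * ‖a - b‖ := by
          push_cast
          have hKm : (0:ℝ) ≤ K ^ m := by positivity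
          have : ((m:ℝ) + 1) * K ^ m * ‖a - b‖ * K = ((m:ℝ) + 1) * K ^ (m + 1) * ‖a - b‖ := by
            rw [pow_succ]; ring
          nlinarith [norm_nonneg (a - b), pow_nonneg hK0 (m + 1)]

lemma main_est (A B : Mat) (m : ℕ) (hm : 0 < m) (hbig : ‖A‖ + ‖B‖ + 1 ≤ (m : ℝ)) :
    ‖(exp ((m : ℝ)⁻¹ • A) * exp ((m : ℝ)⁻¹ • B)) ^ m - exp (A + B)‖
      ≤ 58 * (‖A‖ + ‖B‖ + 1) ^ 2 * Real.exp (2 * (‖A‖ + ‖B‖ + 1)) / m := by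
  have hm0 : (0 : ℝ) < m := by exact_mod_cast hm
  set h : ℝ := ‖A‖ + ‖B‖ + 1 with hh
  have hh1 : (1 : ℝ) ≤ h := by
    have := norm_nonneg A; have := norm_nonneg B; simp only [hh]; linarith
  set c : ℝ := h / m with hc
  have hc0 : 0 ≤ c := by positivity
  have hc1 : c ≤ 1 := (div_le_one hm0).mpr hbig
  set x : Mat := (m : ℝ)⁻¹ • A with hxdef
  set y : Mat := (m : ℝ)⁻¹ • B with hydef
  have hx : ‖x‖ ≤ c := by
    rw [hxdef, norm_smul, norm_inv, Real.norm_natCast, hc, div_eq_inv_mul]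
    gcongr
    simp only [hh]; linarith [norm_nonneg B]
  have hy : ‖y‖ ≤ c := by
    rw [hydef, norm_smul, norm_inv, Real.norm_natCast, hc, div_eq_inv_mul]
    gcongr
    simp only [hh]; linarith [norm_nonneg A]
  have hXm : (exp (x + y)) ^ m = exp (A + B) := by
    rw [← Matrix.exp_nsmul]
    congr 1
    rw [hxdef, hydef, ← smul_add, ← Nat.cast_smul_eq_nsmul ℝ, smul_smul,
      mul_inv_cancel₀ (ne_of_gt hm0), one_smul]
  have hxy2c : ‖x + y‖ ≤ 2 * c := by
    calc ‖x + y‖ ≤ ‖x‖ + ‖y‖ := norm_add_le x y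
      _ ≤ 2 * c := by linarith
  set K : ℝ := Real.exp (2 * c) with hK
  have hK1 : (1 : ℝ) ≤ K := Real.one_le_exp (by positivity)
  have hXK : ‖exp (x + y)‖ ≤ K :=
    le_trans (norm_exp_le _) (Real.exp_le_exp.mpr hxy2c)
  have hYK : ‖exp x * exp y‖ ≤ K := by
    calc ‖exp x * exp y‖ ≤ ‖exp x‖ * ‖exp y‖ := norm_mul_le _ _
      _ ≤ Real.exp ‖x‖ * Real.exp ‖y‖ := by
          have h1 := norm_exp_le x
          have h2 := norm_exp_le y
          exact mul_le_mul h1 h2 (norm_nonneg _) (Real.exp_nonneg _)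
      _ ≤ Real.exp c * Real.exp c := by
          have h1 := Real.exp_le_exp.mpr hx
          have h2 := Real.exp_le_exp.mpr hy
          exact mul_le_mul h1 h2 (Real.exp_nonneg _) (Real.exp_nonneg _)
      _ = K := by rw [hK, ← Real.exp_add]; ring_nf
  have hdiff : ‖exp x * exp y - exp (x + y)‖ ≤ 58 * c ^ 2 :=
    exp_prod_remainder x y c hc1 hx hy
  obtain ⟨k, rfl⟩ : ∃ k, m = k + 1 := ⟨m - 1, (Nat.succ_pred_eq_of_pos hm).symm⟩
  have hpow : ‖(exp x * exp y) ^ (k + 1) - (exp (x + y)) ^ (k + 1)‖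
      ≤ (k + 1) * K ^ k * ‖exp x * exp y - exp (x + y)‖ :=
    norm_pow_sub_pow _ _ K hYK hXK k
  have hKk : K ^ k ≤ K ^ (k + 1) := pow_le_pow_right₀ hK1 (Nat.le_succ k)
  have hKm : K ^ (k + 1) = Real.exp (2 * h) := by
    rw [hK, ← Real.exp_nat_mul]
    congr 1
    rw [hc]
    field_simp
  calc ‖(exp x * exp y) ^ (k + 1) - exp (A + B)‖
      = ‖(exp x * exp y) ^ (k + 1) - (exp (x + y)) ^ (k + 1)‖ := by rw [hXm]
    _ ≤ (k + 1) * K ^ k * ‖exp x * exp y - exp (x + y)‖ := hpow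
    _ ≤ (k + 1) * K ^ (k + 1) * (58 * c ^ 2) := by
        have hk1 : (0:ℝ) ≤ (k:ℝ) + 1 := by positivity
        have e1 : ((k:ℝ) + 1) * K ^ k ≤ ((k:ℝ) + 1) * K ^ (k + 1) :=
          mul_le_mul_of_nonneg_left hKk hk1
        have e0 : (0:ℝ) ≤ ((k:ℝ) + 1) * K ^ k := by positivity
        exact mul_le_mul e1 hdiff (norm_nonneg _) (by positivity)
    _ = 58 * h ^ 2 * Real.exp (2 * h) / (k + 1) := by
        rw [hKm, hc]
        have hne : ((k:ℝ) + 1) ≠ 0 := by positivity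
        field_simp
        push_cast
        ring
    _ ≤ 58 * h ^ 2 * Real.exp (2 * h) / (↑(k + 1)) := by push_cast; exact le_refl _

lemma GT_pos (A B : Mat) (hA : Aᵀ = A) (hB : Bᵀ = B) :
    (exp (A + B)).trace ≤ (exp A * exp B).trace := by
  have hcont : Continuous (Matrix.trace : Mat → ℝ) :=
    LinearMap.continuous_of_finiteDimensional (Matrix.traceLinearMap (Fin r) ℝ ℝ)
  set C : ℝ := 58 * (‖A‖ + ‖B‖ + 1) ^ 2 * Real.exp (2 * (‖A‖ + ‖B‖ + 1)) with hC
  set g : ℕ → Mat := fun n =>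
    (exp (((2 ^ n : ℕ) : ℝ)⁻¹ • A) * exp (((2 ^ n : ℕ) : ℝ)⁻¹ • B)) ^ 2 ^ n with hg
  have hcast : ∀ n : ℕ, ((2 ^ n : ℕ) : ℝ) ≠ 0 := fun n => by positivity
  have hle : ∀ n, (g n).trace ≤ (exp A * exp B).trace := by
    intro n
    set x : Mat := ((2 ^ n : ℕ) : ℝ)⁻¹ • A with hx
    set y : Mat := ((2 ^ n : ℕ) : ℝ)⁻¹ • B with hy
    have hXs : (exp x)ᵀ = exp x := by
      rw [← Matrix.exp_transpose, hx, Matrix.transpose_smul, hA]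
    have hYs : (exp y)ᵀ = exp y := by
      rw [← Matrix.exp_transpose, hy, Matrix.transpose_smul, hB]
    have hXp : (exp x) ^ 2 ^ n = exp A := by
      rw [← Matrix.exp_nsmul, hx, ← Nat.cast_smul_eq_nsmul ℝ, smul_smul,
        mul_inv_cancel₀ (hcast n), one_smul]
    have hYp : (exp y) ^ 2 ^ n = exp B := by
      rw [← Matrix.exp_nsmul, hy, ← Nat.cast_smul_eq_nsmul ℝ, smul_smul,
        mul_inv_cancel₀ (hcast n), one_smul]
    have hkey := (key n).2 (exp x) (exp y) hXs hYs
    rwa [hXp, hYp] at hkey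
  have hlim : Filter.Tendsto g Filter.atTop (nhds (exp (A + B))) := by
    rw [← tendsto_sub_nhds_zero_iff]
    apply squeeze_zero_norm' (a := fun n : ℕ => C * ((2 : ℝ)⁻¹) ^ n)
    · have hev : ∀ᶠ n in Filter.atTop, ‖A‖ + ‖B‖ + 1 ≤ ((2 ^ n : ℕ) : ℝ) := by
        have h2 : Filter.Tendsto (fun n : ℕ => (2 : ℝ) ^ n) Filter.atTop Filter.atTop :=
          tendsto_pow_atTop_atTop_of_one_lt one_lt_two
        filter_upwards [h2.eventually_ge_atTop (‖A‖ + ‖B‖ + 1)] with n hn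
        push_cast
        exact hn
      filter_upwards [hev] with n hn
      have hme := main_est A B (2 ^ n) (Nat.two_pow_pos n) hn
      calc ‖g n - exp (A + B)‖
          ≤ 58 * (‖A‖ + ‖B‖ + 1) ^ 2 * Real.exp (2 * (‖A‖ + ‖B‖ + 1)) / ((2 ^ n : ℕ) : ℝ) := hme
        _ = C * ((2 : ℝ)⁻¹) ^ n := by
            rw [hC, div_eq_mul_inv, inv_pow]
            push_cast
            ring
    · simpa using (tendsto_pow_atTop_nhds_zero_of_lt_one (r := (2:ℝ)⁻¹) (by norm_num) (by norm_num)).const_mul C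
  exact le_of_tendsto ((hcont.tendsto _).comp hlim) (Filter.Eventually.of_forall hle)

end Analytic

end GTaux

/-- The Golden–Thompson inequality for real symmetric matrices:
`Tr(exp(A + B)) ≤ Tr(exp(A)·exp(B))`. -/
theorem golden_thompson_symmetric_matrices
    {r : ℕ} (A B : Matrix (Fin r) (Fin r) ℝ)
    (hA : A.IsHermitian) (hB : B.IsHermitian) :
    (NormedSpace.exp (A + B)).trace ≤ (NormedSpace.exp A * NormedSpace.exp B).trace := by
  rcases Nat.eq_zero_or_pos r with hr | hr
  · subst hr
    simp [Matrix.trace]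
  · haveI : Nonempty (Fin r) := Fin.pos_iff_nonempty.mp hr
    have hAt : Aᵀ = A := by
      rw [← Matrix.conjTranspose_eq_transpose_of_trivial]
      exact hA
    have hBt : Bᵀ = B := by
      rw [← Matrix.conjTranspose_eq_transpose_of_trivial]
      exact hB
    exact GTaux.GT_pos A B hAt hBt
end

section
/- Let k ≥ 1, σ > 0, t > 0, and let X_1, …, X_k be independent centered Gaussian random variables each with variance σ². Let Z = ∑_{i=1}^k X_i². Then Pr[Z − k·σ² ≥ (2·√(k·t) + 2·t)·σ²] ≤ exp(−t) and Pr[k·σ² − Z ≥ 2·√(k·t)·σ²] ≤ exp(−t). -/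
open Real

lemma LM_exp_sub_half_sq_le {x : ℝ} (h0 : 0 ≤ x) (h1 : x ≤ 1) :
    Real.exp (x - x ^ 2 / 2) ≤ 1 + x := by
  have h2 : Real.exp x ≤ 1 + x + x ^ 2 / 2 + x ^ 3 * 4 / (6 * 3) := by
    have h := Real.exp_bound' h0 h1 (n := 3) (by norm_num)
    simp [Finset.sum_range_succ, Nat.factorial] at h
    convert h using 1
    ring
  have h3 : (1 : ℝ) + x ^ 2 / 2 ≤ Real.exp (x ^ 2 / 2) := by
    have := Real.add_one_le_exp (x ^ 2 / 2); linarith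
  have hmul : Real.exp (x - x ^ 2 / 2) * Real.exp (x ^ 2 / 2) = Real.exp x := by
    rw [← Real.exp_add]; ring_nf
  have key : Real.exp (x - x ^ 2 / 2) * Real.exp (x ^ 2 / 2) ≤ (1 + x) * Real.exp (x ^ 2 / 2) := by
    rw [hmul]
    calc Real.exp x ≤ 1 + x + x ^ 2 / 2 + x ^ 3 * 4 / (6 * 3) := h2
      _ ≤ (1 + x) * (1 + x ^ 2 / 2) := by nlinarith [pow_nonneg h0 3]
      _ ≤ (1 + x) * Real.exp (x ^ 2 / 2) := by
          have h1x : (0:ℝ) ≤ 1 + x := by linarith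
          exact mul_le_mul_of_nonneg_left h3 h1x
  exact le_of_mul_le_mul_right key (Real.exp_pos _)

open MeasureTheory ProbabilityTheory Real

lemma LM_gauss_sq {Ω : Type*} [MeasureSpace Ω] [IsProbabilityMeasure (ℙ : Measure Ω)]
    {σ : ℝ} (hσ : 0 < σ) (Y : Ω → ℝ) (hY : Measurable Y)
    (hmap : Measure.map Y ℙ = gaussianReal 0 (Real.toNNReal (σ ^ 2)))
    {c : ℝ} (hc : 2 * c * σ ^ 2 < 1) :
    Integrable (fun ω => Real.exp (c * Y ω ^ 2)) ℙ ∧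
      ∫ ω, Real.exp (c * Y ω ^ 2) ∂ℙ = 1 / Real.sqrt (1 - 2 * c * σ ^ 2) := by
  have hσ' : σ ≠ 0 := ne_of_gt hσ
  have hv : (0 : ℝ) < σ ^ 2 := by positivity
  have h1 : (0 : ℝ) < 1 - 2 * c * σ ^ 2 := by linarith
  set v : NNReal := Real.toNNReal (σ ^ 2) with hvdef
  have hv0 : v ≠ 0 := by
    simp [hvdef, Real.toNNReal_eq_zero, not_le, hv, hσ']
  have hvc : (v : ℝ) = σ ^ 2 := Real.coe_toNNReal _ hv.le
  set b : ℝ := 1 / (2 * σ ^ 2) - c with hbdef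
  have hb : 0 < b := by
    rw [hbdef, sub_pos, lt_div_iff₀ (by positivity)]
    linarith
  have hb' : b ≠ 0 := ne_of_gt hb
  set g : ℝ → ℝ := fun y => Real.exp (c * y ^ 2) with hgdef
  have hg : Measurable g := by measurability
  -- pointwise identity
  have hpw : ∀ x : ℝ, gaussianPDFReal 0 v x * g x
      = (Real.sqrt (2 * π * σ ^ 2))⁻¹ * Real.exp (-b * x ^ 2) := by
    intro x
    have hss : σ⁻¹ ^ 2 * σ ^ 2 = 1 := by field_simp
    simp only [gaussianPDFReal, hvc, hgdef, sub_zero, mul_assoc, ← Real.exp_add]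
    congr 2
    field_simp
    linear_combination x ^ 2 * hss
  -- integrability over ℝ of the density-weighted function
  have hint : Integrable (fun x => gaussianPDFReal 0 v x * g x) := by
    simp only [hpw]
    exact (integrable_exp_neg_mul_sq hb).const_mul _
  -- value of the real integral
  have hval : ∫ x : ℝ, gaussianPDFReal 0 v x * g x
      = 1 / Real.sqrt (1 - 2 * c * σ ^ 2) := by
    simp only [hpw]
    rw [integral_const_mul, integral_gaussian]
    rw [eq_div_iff (ne_of_gt (Real.sqrt_pos.mpr h1))]
    have hmm : Real.sqrt (π / b) * Real.sqrt (1 - 2 * c * σ ^ 2)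
        = Real.sqrt (2 * π * σ ^ 2) := by
      rw [← Real.sqrt_mul (by positivity)]
      have hss : σ⁻¹ ^ 2 * σ ^ 2 = 1 := by field_simp
      congr 1
      field_simp
      linear_combination (-1 : ℝ) * hss
    rw [mul_assoc, hmm, inv_mul_cancel₀ (by positivity)]
  -- transport along the map
  have hmeq : ∫ ω, Real.exp (c * Y ω ^ 2) ∂ℙ = ∫ y, g y ∂(Measure.map Y ℙ) :=
    (integral_map hY.aemeasurable hg.aestronglyMeasurable).symm
  have hwd : gaussianReal 0 v = volume.withDensity
      (fun x => ((Real.toNNReal (gaussianPDFReal 0 v x) : NNReal) : ENNReal)) := by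
    rw [gaussianReal_of_var_ne_zero _ hv0]
    rfl
  have hsmul : ∀ x : ℝ, (Real.toNNReal (gaussianPDFReal 0 v x)) • g x
      = gaussianPDFReal 0 v x * g x := by
    intro x
    rw [NNReal.smul_def, smul_eq_mul, Real.coe_toNNReal _ (gaussianPDFReal_nonneg _ _ _)]
  have hmeasd : Measurable fun x => Real.toNNReal (gaussianPDFReal 0 v x) :=
    (measurable_gaussianPDFReal 0 v).real_toNNReal
  constructor
  · have : Integrable (g ∘ Y) ℙ := by
      rw [← integrable_map_measure hg.aestronglyMeasurable hY.aemeasurable, hmap, hwd]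
      exact (integrable_withDensity_iff_integrable_smul hmeasd).mpr
        (hint.congr (ae_of_all _ fun x => (hsmul x).symm))
    exact this
  · rw [hmeq, hmap, hwd, integral_withDensity_eq_integral_smul hmeasd]
    rw [← hval]
    exact integral_congr_ae (ae_of_all _ hsmul)

lemma LM_upper_quad {K s t y : ℝ} (hK0 : 0 < K) (hs : 0 < s) (ht : 0 < t)
    (hs2 : s ^ 2 = K * t) (hy0 : 0 ≤ y) (hyrel : y * (K + 2 * s) = 2 * (s + t)) :
    (K + 2 * s) / K ≤ Real.exp y := by
  have hquad := Real.quadratic_le_exp_of_nonneg hy0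
  have hKy : K * y * (K + 2 * s) ^ 2 = 2 * K * (s + t) * (K + 2 * s) := by
    linear_combination (K * (K + 2 * s)) * hyrel
  have hKyy : K * y ^ 2 * (K + 2 * s) ^ 2 = 4 * K * (s + t) ^ 2 := by
    linear_combination (K * (y * (K + 2 * s) + 2 * (s + t))) * hyrel
  have hz : s ^ 2 - K * t = 0 := by rw [hs2]; ring
  have hzz : (2 * K + 8 * s) * (s ^ 2 - K * t) = 0 := by rw [hz, mul_zero]
  have h2kt : (0 : ℝ) ≤ 2 * K * t ^ 2 := by positivity
  have heq : 2 * K * (s + t) * (K + 2 * s) + 2 * K * (s + t) ^ 2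
      - 2 * s * (K + 2 * s) ^ 2 = 2 * K * t ^ 2 - (2 * K + 8 * s) * (s ^ 2 - K * t) := by
    ring
  have hpoly : 2 * s * (K + 2 * s) ^ 2
      ≤ 2 * K * (s + t) * (K + 2 * s) + 2 * K * (s + t) ^ 2 := by linarith
  have he4 : (K * y + K * y ^ 2 / 2) * (K + 2 * s) ^ 2
      = 2 * K * (s + t) * (K + 2 * s) + 2 * K * (s + t) ^ 2 := by
    linear_combination hKy + hKyy / 2
  have hineq' : (2 * s) * (K + 2 * s) ^ 2
      ≤ (K * y + K * y ^ 2 / 2) * (K + 2 * s) ^ 2 := by linarith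
  have hP : (0 : ℝ) < (K + 2 * s) ^ 2 := by positivity
  have hfin : 2 * s ≤ K * y + K * y ^ 2 / 2 := le_of_mul_le_mul_right hineq' hP
  rw [div_le_iff₀ hK0]
  nlinarith [hquad, hfin]

open MeasureTheory ProbabilityTheory

set_option maxHeartbeats 1000000 in
/-- Laurent–Massart tail bounds for a sum of squares of `k` independent
centered Gaussians of variance `σ²` (a scaled chi-squared random variable with `k`
degrees of freedom). -/
theorem laurent_massart_chi_squared
    {Ω : Type*} [MeasureSpace Ω] [IsProbabilityMeasure (ℙ : Measure Ω)]
    {k : ℕ} (hk : 1 ≤ k) (σ t : ℝ) (hσ : 0 < σ) (ht : 0 < t)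
    (X : Fin k → Ω → ℝ) (hmeas : ∀ i, Measurable (X i))
    (hindep : iIndepFun X ℙ)
    (hgauss : ∀ i, Measure.map (X i) ℙ = gaussianReal 0 (Real.toNNReal (σ ^ 2)))
    (Z : Ω → ℝ) (hZ : ∀ ω, Z ω = ∑ i, X i ω ^ 2) :
    ℙ {ω | (2 * Real.sqrt (k * t) + 2 * t) * σ ^ 2 ≤ Z ω - k * σ ^ 2} ≤
        ENNReal.ofReal (Real.exp (-t)) ∧
      ℙ {ω | 2 * Real.sqrt (k * t) * σ ^ 2 ≤ k * σ ^ 2 - Z ω} ≤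
        ENNReal.ofReal (Real.exp (-t)) := by
  classical
  have hσ' : σ ≠ 0 := ne_of_gt hσ
  have hv : (0 : ℝ) < σ ^ 2 := by positivity
  set K : ℝ := (k : ℝ) with hKdef
  have hK : (1 : ℝ) ≤ K := by rw [hKdef]; exact_mod_cast hk
  have hK0 : (0 : ℝ) < K := by linarith
  set s : ℝ := Real.sqrt (K * t) with hsdef
  have hkt : 0 < K * t := by positivity
  have hs : 0 < s := Real.sqrt_pos.mpr hkt
  have hs2 : s ^ 2 = K * t := Real.sq_sqrt hkt.le
  have hKs0 : (0 : ℝ) < K + 2 * s := by linarith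
  -- squares
  set Sq : Fin k → Ω → ℝ := fun i ω => X i ω ^ 2 with hSq
  have hSqmeas : ∀ i, Measurable (Sq i) := fun i => (hmeas i).pow_const 2
  have hSqindep : iIndepFun Sq ℙ :=
    hindep.comp (fun _ x => x ^ 2) (fun _ => measurable_id.pow_const 2)
  have hZsum : Z = ∑ i, Sq i := by
    funext ω
    rw [hZ]
    simp [hSq, Finset.sum_apply]
  -- integrability and mgf, for any admissible parameter
  have hmgf : ∀ c : ℝ, 2 * c * σ ^ 2 < 1 →
      Integrable (fun ω => Real.exp (c * Z ω)) ℙ ∧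
        mgf Z ℙ c = (1 / Real.sqrt (1 - 2 * c * σ ^ 2)) ^ k := by
    intro c hc
    have hi : ∀ i : Fin k, Integrable (fun ω => Real.exp (c * Sq i ω)) ℙ ∧
        ∫ ω, Real.exp (c * Sq i ω) ∂ℙ = 1 / Real.sqrt (1 - 2 * c * σ ^ 2) :=
      fun i => LM_gauss_sq hσ (X i) (hmeas i) (hgauss i) hc
    constructor
    · rw [hZsum]
      exact iIndepFun.integrable_exp_mul_sum hSqindep hSqmeas (fun i _ => (hi i).1)
    · rw [hZsum, iIndepFun.mgf_sum hSqindep hSqmeas]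
      have hm : ∀ i ∈ Finset.univ, mgf (Sq i) ℙ c = 1 / Real.sqrt (1 - 2 * c * σ ^ 2) :=
        fun i _ => (hi i).2
      rw [Finset.prod_congr rfl hm, Finset.prod_const, Finset.card_univ, Fintype.card_fin]
  clear_value K s Sq
  -- conversion to ENNReal
  have hconv : ∀ (S : Set Ω) (r : ℝ), (ℙ S).toReal ≤ r → ℙ S ≤ ENNReal.ofReal r := by
    intro S r h
    rw [← ENNReal.ofReal_toReal (measure_ne_top ℙ S)]
    exact ENNReal.ofReal_le_ofReal h
  constructor
  · -- upper tail
    set c₁ : ℝ := s / ((K + 2 * s) * σ ^ 2) with hc₁def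
    clear_value c₁
    have hc₁0 : 0 ≤ c₁ := by rw [hc₁def]; positivity
    have e1 : 2 * c₁ * σ ^ 2 = 2 * s / (K + 2 * s) := by
      rw [hc₁def]; field_simp
    have hc₁ : 2 * c₁ * σ ^ 2 < 1 := by
      rw [e1, div_lt_one hKs0]; linarith
    have h1m : 1 - 2 * c₁ * σ ^ 2 = K / (K + 2 * s) := by
      rw [e1]; field_simp; ring
    obtain ⟨hint₁, hmgf₁⟩ := hmgf c₁ hc₁
    set ε₁ : ℝ := (K + 2 * s + 2 * t) * σ ^ 2 with hε₁def
    clear_value ε₁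
    have hset : {ω | (2 * s + 2 * t) * σ ^ 2 ≤ Z ω - K * σ ^ 2} = {ω | ε₁ ≤ Z ω} := by
      ext ω
      simp only [Set.mem_setOf_eq, hε₁def]
      constructor <;> intro h <;> linarith
    have hch := measure_ge_le_exp_mul_mgf (μ := ℙ) (X := Z) ε₁ hc₁0 hint₁
    rw [hmgf₁] at hch
    -- the key real inequality
    have hcε : c₁ * ε₁ = s * (K + 2 * s + 2 * t) / (K + 2 * s) := by
      rw [hc₁def, hε₁def]; field_simp
    have hd : c₁ * ε₁ - t = K * (s + t) / (K + 2 * s) := by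
      rw [hcε]
      field_simp
      linear_combination 2 * hs2
    have h_r : 1 / Real.sqrt (1 - 2 * c₁ * σ ^ 2) ≤ Real.exp ((c₁ * ε₁ - t) / K) := by
      rw [h1m, one_div, ← Real.sqrt_inv, inv_div]
      have h2 : (K + 2 * s) / K ≤ Real.exp ((c₁ * ε₁ - t) / K) ^ 2 := by
        have hexp2 : Real.exp ((c₁ * ε₁ - t) / K) ^ 2
            = Real.exp (2 * ((c₁ * ε₁ - t) / K)) := by
          rw [← Real.exp_nat_mul]; norm_num
        rw [hexp2, hd]
        have hyv : 2 * (K * (s + t) / (K + 2 * s) / K) = 2 * (s + t) / (K + 2 * s) := by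
          field_simp
        rw [hyv]
        exact LM_upper_quad hK0 hs ht hs2 (by positivity) (by field_simp)
      calc Real.sqrt ((K + 2 * s) / K)
          ≤ Real.sqrt (Real.exp ((c₁ * ε₁ - t) / K) ^ 2) := Real.sqrt_le_sqrt h2
        _ = Real.exp ((c₁ * ε₁ - t) / K) := Real.sqrt_sq (Real.exp_pos _).le
    have hrpos : 0 ≤ 1 / Real.sqrt (1 - 2 * c₁ * σ ^ 2) := by positivity
    have hpowk : (1 / Real.sqrt (1 - 2 * c₁ * σ ^ 2)) ^ k
        ≤ Real.exp (c₁ * ε₁ - t) := by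
      calc (1 / Real.sqrt (1 - 2 * c₁ * σ ^ 2)) ^ k
          ≤ Real.exp ((c₁ * ε₁ - t) / K) ^ k := pow_le_pow_left₀ hrpos h_r k
        _ = Real.exp ((k : ℝ) * ((c₁ * ε₁ - t) / K)) := (Real.exp_nat_mul _ k).symm
        _ = Real.exp (c₁ * ε₁ - t) := by
            congr 1
            rw [← hKdef]
            field_simp
    have hfinal : Real.exp (-c₁ * ε₁) * (1 / Real.sqrt (1 - 2 * c₁ * σ ^ 2)) ^ k
        ≤ Real.exp (-t) := by
      calc Real.exp (-c₁ * ε₁) * (1 / Real.sqrt (1 - 2 * c₁ * σ ^ 2)) ^ k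
          ≤ Real.exp (-c₁ * ε₁) * Real.exp (c₁ * ε₁ - t) := by
            exact mul_le_mul_of_nonneg_left hpowk (Real.exp_pos _).le
        _ = Real.exp (-t) := by rw [← Real.exp_add]; ring_nf
    rw [hset]
    exact hconv _ _ (hch.trans hfinal)
  · -- lower tail
    by_cases hcase : 2 * s ≤ K
    case neg =>
      -- the event is empty
      have hempty : {ω | 2 * s * σ ^ 2 ≤ K * σ ^ 2 - Z ω} = (∅ : Set Ω) := by
        ext ω
        simp only [Set.mem_setOf_eq, Set.mem_empty_iff_false, iff_false, not_le]
        have hZ0 : 0 ≤ Z ω := by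
          rw [hZ]
          exact Finset.sum_nonneg fun i _ => sq_nonneg _
        push_neg at hcase
        have hprod : 0 < (2 * s - K) * σ ^ 2 := mul_pos (by linarith) hv
        linarith
      rw [hempty]
      simp
    case pos =>
      set c₂ : ℝ := -(s / (K * σ ^ 2)) with hc₂def
      clear_value c₂
      have hc₂0 : c₂ ≤ 0 := by
        rw [hc₂def, neg_nonpos]
        positivity
      have hc₂ : 2 * c₂ * σ ^ 2 < 1 := by
        have : 2 * c₂ * σ ^ 2 = -(2 * s / K) := by rw [hc₂def]; field_simp
        rw [this]
        have : 0 < 2 * s / K := by positivity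
        linarith
      have h1m2 : 1 - 2 * c₂ * σ ^ 2 = (K + 2 * s) / K := by
        rw [hc₂def]; field_simp; ring
      obtain ⟨hint₂, hmgf₂⟩ := hmgf c₂ hc₂
      set ε₂ : ℝ := (K - 2 * s) * σ ^ 2 with hε₂def
      clear_value ε₂
      have hset : {ω | 2 * s * σ ^ 2 ≤ K * σ ^ 2 - Z ω} = {ω | Z ω ≤ ε₂} := by
        ext ω
        simp only [Set.mem_setOf_eq, hε₂def]
        constructor <;> intro h <;> linarith
      have hch := measure_le_le_exp_mul_mgf (μ := ℙ) (X := Z) ε₂ hc₂0 hint₂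
      rw [hmgf₂] at hch
      -- key real inequality
      set x : ℝ := 2 * s / K with hxdef
      clear_value x
      have hx0 : 0 ≤ x := by rw [hxdef]; positivity
      have hx1 : x ≤ 1 := by rw [hxdef, div_le_one hK0]; linarith
      have hm : -(2 * ((c₂ * ε₂ - t) / K)) = x - x ^ 2 / 2 := by
        rw [hc₂def, hε₂def, hxdef]
        field_simp
        linear_combination (-1 : ℝ) * hs2
      have hkey := LM_exp_sub_half_sq_le hx0 hx1
      have hx_eq : 1 + x = (K + 2 * s) / K := by rw [hxdef]; field_simp
      have h2 : K / (K + 2 * s) ≤ Real.exp ((c₂ * ε₂ - t) / K) ^ 2 := by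
        have hexp2 : Real.exp ((c₂ * ε₂ - t) / K) ^ 2
            = Real.exp (2 * ((c₂ * ε₂ - t) / K)) := by
          rw [← Real.exp_nat_mul]; norm_num
        rw [hexp2]
        have hneg : Real.exp (-(2 * ((c₂ * ε₂ - t) / K))) ≤ (K + 2 * s) / K := by
          rw [hm, ← hx_eq]; exact hkey
        have hpos := Real.exp_pos (-(2 * ((c₂ * ε₂ - t) / K)))
        have hinv := inv_anti₀ hpos hneg
        rwa [inv_div, ← Real.exp_neg, neg_neg] at hinv
      have h_r : 1 / Real.sqrt (1 - 2 * c₂ * σ ^ 2) ≤ Real.exp ((c₂ * ε₂ - t) / K) := by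
        rw [h1m2, one_div, ← Real.sqrt_inv, inv_div]
        calc Real.sqrt (K / (K + 2 * s))
            ≤ Real.sqrt (Real.exp ((c₂ * ε₂ - t) / K) ^ 2) := Real.sqrt_le_sqrt h2
          _ = Real.exp ((c₂ * ε₂ - t) / K) := Real.sqrt_sq (Real.exp_pos _).le
      have hrpos : 0 ≤ 1 / Real.sqrt (1 - 2 * c₂ * σ ^ 2) := by positivity
      have hpowk : (1 / Real.sqrt (1 - 2 * c₂ * σ ^ 2)) ^ k
          ≤ Real.exp (c₂ * ε₂ - t) := by
        calc (1 / Real.sqrt (1 - 2 * c₂ * σ ^ 2)) ^ k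
            ≤ Real.exp ((c₂ * ε₂ - t) / K) ^ k := pow_le_pow_left₀ hrpos h_r k
          _ = Real.exp ((k : ℝ) * ((c₂ * ε₂ - t) / K)) := (Real.exp_nat_mul _ k).symm
          _ = Real.exp (c₂ * ε₂ - t) := by
              congr 1
              rw [← hKdef]
              field_simp
      have hfinal : Real.exp (-c₂ * ε₂) * (1 / Real.sqrt (1 - 2 * c₂ * σ ^ 2)) ^ k
          ≤ Real.exp (-t) := by
        calc Real.exp (-c₂ * ε₂) * (1 / Real.sqrt (1 - 2 * c₂ * σ ^ 2)) ^ k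
            ≤ Real.exp (-c₂ * ε₂) * Real.exp (c₂ * ε₂ - t) := by
              exact mul_le_mul_of_nonneg_left hpowk (Real.exp_pos _).le
          _ = Real.exp (-t) := by rw [← Real.exp_add]; ring_nf
      rw [hset]
      exact hconv _ _ (hch.trans hfinal)
end
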